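/- Let X ∈ ℝ^{n×p} with p ≥ 2 have columns of unit ℓ₂-norm, let β* ∈ ℝ^p with s* = ‖β*‖₀, let y = Xβ* + ε where ε has i.i.d. N(0, σ²) entries with σ > 0, let a ≥ 0, set δ = σ√(2(1+a)·log p), and let c ≥ 0 with γ(⌈(2+c)s*⌉) > 0. Suppose β̂ ∈ ℝ^p is feasible for the Discrete Dantzig Selector problem with parameter δ (i.e., ‖Xᵀ(y − Xβ̂)‖∞ ≤ δ) and satisfies ‖β̂‖₀ ≤ (1+c)·ŝ_LB, where ŝ_LB is a lower bound on the optimal value of that problem (ŝ_LB ≤ ‖β‖₀ for every feasible β). Then, with probability at least 1 − ( pᵃ √(π log p) )⁻¹: ‖β̂‖₀ ≤ (1+c)s*; ‖β̂ − β*‖₁ ≤ 2(2+c) [γ(⌈(2+c)s*⌉)]⁻² s* δ; ‖β̂ − β*‖₂² ≤ 4(2+c) [γ(⌈(2+c)s*⌉)]⁻⁴ s* δ²; and n⁻¹ ‖X(β̂ − β*)‖₂² ≤ 4(2+c) [γ(⌈(2+c)s*⌉)]⁻² s* δ². -/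

import Mathlib

noncomputable section
open Classical MeasureTheory ProbabilityTheory

/-- The ℓ₀ "norm": number of nonzero entries. -/
def l0 {p : ℕ} (β : Fin p → ℝ) : ℕ := (Finset.univ.filter fun i => β i ≠ 0).card

/-- ℓ₁-norm. -/
def l1 {p : ℕ} (β : Fin p → ℝ) : ℝ := ∑ i, |β i|

/-- Squared Euclidean norm. -/
def l2sq {q : ℕ} (v : Fin q → ℝ) : ℝ := ∑ i, (v i) ^ 2

/-- Euclidean norm. -/
def l2 {q : ℕ} (v : Fin q → ℝ) : ℝ := Real.sqrt (l2sq v)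

/-- `γ(k) = min{ ‖Xθ‖₂/‖θ‖₂ : θ ≠ 0, ‖θ‖₀ ≤ k }`. -/
def gammaX {n p : ℕ} (X : Matrix (Fin n) (Fin p) ℝ) (k : ℕ) : ℝ :=
  sInf {r : ℝ | ∃ θ : Fin p → ℝ, θ ≠ 0 ∧ l0 θ ≤ k ∧ r = l2 (X.mulVec θ) / l2 θ}

/-- Feasibility for the Dantzig-type constraint: `‖Xᵀ(y − Xβ)‖∞ ≤ δ`. -/
def Feas {n p : ℕ} (X : Matrix (Fin n) (Fin p) ℝ) (y : Fin n → ℝ) (δ : ℝ)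
    (β : Fin p → ℝ) : Prop :=
  ∀ j, |X.transpose.mulVec (y - X.mulVec β) j| ≤ δ

/-!
Each coordinate of `Z = Xᵀε` is a unit-norm combination of independent `N(0, σ²)` variables, hence
itself `N(0, σ²)`. The Mills-ratio bound `P(|Z_j| > δ) ≤ √(2σ²/π) / δ · exp(-δ²/(2σ²))` equals
`p^{-(1+a)} / √(π(1+a) log p)` at the chosen `δ`, so a union bound over the `p` coordinates shows
that `‖Z‖∞ ≤ δ`, i.e. `β*` is feasible, with probability at least `1 - (pᵃ √(π log p))⁻¹`.

On that event `ŝ_LB ≤ s*`, hence `‖β̂‖₀ ≤ (1+c)s*`, and `h = β̂ - β*` satisfies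
`‖h‖₀ ≤ (2+c)s*` and `‖XᵀXh‖∞ ≤ 2δ`. Combining `γ²‖h‖₂² ≤ ‖Xh‖₂²`,
`‖Xh‖₂² = ⟨h, XᵀXh⟩ ≤ 2δ‖h‖₁` and `‖h‖₁² ≤ ‖h‖₀‖h‖₂²` gives the three error bounds.
-/

open Real Set Matrix
open scoped NNReal ENNReal

section GaussianSums

variable {Ω ι : Type*} [MeasurableSpace Ω] {P : Measure Ω} [IsProbabilityMeasure P]

lemma hasLaw_sum_gaussianReal_of_iIndepFun {ξ : ι → Ω → ℝ} (hind : iIndepFun ξ P)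
    {v : ι → ℝ≥0} (hξ : ∀ i, HasLaw (ξ i) (gaussianReal 0 (v i)) P) (s : Finset ι) :
    HasLaw (fun ω => ∑ i ∈ s, ξ i ω) (gaussianReal 0 (∑ i ∈ s, v i)) P := by
  classical
  induction s using Finset.induction_on with
  | empty => exact ⟨by fun_prop, by simp [Measure.map_const, gaussianReal_zero_var]⟩
  | insert a s ha ih =>
    have hindep : IndepFun (ξ a) (fun ω => ∑ i ∈ s, ξ i ω) P := by
      simpa only [Finset.sum_fn] using
        (hind.indepFun_finsetSum_of_notMem₀ (fun i => (hξ i).aemeasurable) ha).symm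
    simp_rw [Finset.sum_insert ha]
    refine ⟨(hξ a).aemeasurable.add ih.aemeasurable, ?_⟩
    have hsum := gaussianReal_add_gaussianReal_of_indepFun hindep (hξ a).map_eq ih.map_eq
    rwa [zero_add] at hsum

lemma hasLaw_sum_mul_gaussianReal [Fintype ι] {ε : ι → Ω → ℝ} (hind : iIndepFun ε P)
    {v : ℝ≥0} (hε : ∀ i, HasLaw (ε i) (gaussianReal 0 v) P) {c : ι → ℝ}
    (hc : ∑ i, c i ^ 2 = 1) :
    HasLaw (fun ω => ∑ i, c i * ε i ω) (gaussianReal 0 v) P := by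
  have hscaled : ∀ i, HasLaw (fun ω => c i * ε i ω)
      (gaussianReal 0 (.mk (c i ^ 2) (sq_nonneg _) * v)) P := fun i => by
    simpa using gaussianReal_const_mul (hε i) (c i)
  have hind' : iIndepFun (fun i ω => c i * ε i ω) P :=
    hind.comp₀ (fun i x => c i * x) (fun i => (hε i).aemeasurable) (fun i => by fun_prop)
  have hvar : ∑ i, (.mk (c i ^ 2) (sq_nonneg _) * v : ℝ≥0) = v := by
    ext; simp [← Finset.sum_mul, hc]
  simpa [hvar] using hasLaw_sum_gaussianReal_of_iIndepFun hind' hscaled Finset.univ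

end GaussianSums

lemma integral_Ioi_exp_neg_sq_div_le {v t : ℝ} (hv : 0 < v) (ht : 0 < t) :
    ∫ x in Ioi t, rexp (-x ^ 2 / (2 * v)) ≤ v / t * rexp (-t ^ 2 / (2 * v)) := by
  have hderiv : ∀ x ∈ Ici t, HasDerivAt (fun x => -v * rexp (-x ^ 2 / (2 * v)))
      (x * rexp (-x ^ 2 / (2 * v))) x := fun x _ => by
    refine ((((hasDerivAt_pow 2 x).fun_neg.div_const (2 * v)).exp).const_mul (-v)).congr_deriv ?_
    field_simp
    ring
  have hlim : Filter.Tendsto (fun x => -v * rexp (-x ^ 2 / (2 * v))) Filter.atTop (nhds 0) := by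
    have hsq : Filter.Tendsto (fun x : ℝ => -x ^ 2 / (2 * v)) Filter.atTop Filter.atBot := by
      simp_rw [neg_div]
      exact Filter.tendsto_neg_atTop_atBot.comp
        ((Filter.tendsto_pow_atTop two_ne_zero).atTop_div_const (by positivity))
    simpa using (tendsto_exp_atBot.comp hsq).const_mul (-v)
  have hnonneg : ∀ x ∈ Ioi t, 0 ≤ x * rexp (-x ^ 2 / (2 * v)) := fun x hx =>
    mul_nonneg (ht.trans hx).le (exp_nonneg _)
  have hfirst_moment : ∫ x in Ioi t, x * rexp (-x ^ 2 / (2 * v)) = v * rexp (-t ^ 2 / (2 * v)) := by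
    rw [integral_Ioi_of_hasDerivAt_of_nonneg' hderiv hnonneg hlim]
    ring
  calc ∫ x in Ioi t, rexp (-x ^ 2 / (2 * v))
      ≤ ∫ x in Ioi t, t⁻¹ * (x * rexp (-x ^ 2 / (2 * v))) := by
        refine setIntegral_mono_on ?_
          ((integrableOn_Ioi_deriv_of_nonneg' hderiv hnonneg hlim).const_mul _)
          measurableSet_Ioi fun x hx => ?_
        · refine (integrable_exp_neg_mul_sq (inv_pos.mpr (by positivity : 0 < 2 * v))).integrableOn
            |>.congr_fun (fun x _ => ?_) measurableSet_Ioi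
          dsimp only
          congr 1
          ring
        · rw [← mul_assoc, ← div_eq_inv_mul]
          exact le_mul_of_one_le_left (exp_nonneg _) ((one_le_div ht).mpr (le_of_lt hx))
    _ = v / t * rexp (-t ^ 2 / (2 * v)) := by
        rw [integral_const_mul, hfirst_moment]
        ring

lemma gaussianReal_Ioi_le {v : ℝ≥0} (hv : v ≠ 0) {t : ℝ} (ht : 0 < t) :
    gaussianReal 0 v (Ioi t) ≤ ENNReal.ofReal (√(v / (2 * π)) / t * rexp (-t ^ 2 / (2 * v))) := by
  have hv' : (0 : ℝ) < v := by positivity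
  rw [gaussianReal_apply_eq_integral _ hv]
  refine ENNReal.ofReal_le_ofReal ?_
  simp only [gaussianPDFReal, sub_zero]
  rw [integral_const_mul]
  calc (√(2 * π * v))⁻¹ * ∫ x in Ioi t, rexp (-x ^ 2 / (2 * v))
      ≤ (√(2 * π * v))⁻¹ * (v / t * rexp (-t ^ 2 / (2 * v))) :=
        mul_le_mul_of_nonneg_left (integral_Ioi_exp_neg_sq_div_le hv' ht) (by positivity)
    _ = √(v / (2 * π)) / t * rexp (-t ^ 2 / (2 * v)) := by
        have hcoef : (√(2 * π * v))⁻¹ * v = √(v / (2 * π)) := by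
          rw [← sqrt_inv, ← sqrt_sq hv'.le, ← sqrt_mul (by positivity), sqrt_sq hv'.le]
          congr 1
          field_simp
        rw [← hcoef]
        ring

lemma gaussianReal_lt_abs_le {v : ℝ≥0} (hv : v ≠ 0) {t : ℝ} (ht : 0 < t) :
    gaussianReal 0 v {x | t < |x|} ≤
      ENNReal.ofReal (√(2 * v / π) / t * rexp (-t ^ 2 / (2 * v))) := by
  have hsplit : {x : ℝ | t < |x|} = -Ioi t ∪ Ioi t := by
    ext x
    simp only [mem_ofPred_eq, mem_union, Set.mem_neg, mem_Ioi, lt_abs]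
    constructor <;> rintro (h | h) <;> first | (left; linarith) | (right; linarith)
  have hsymm : gaussianReal 0 v (-Ioi t) = gaussianReal 0 v (Ioi t) := by
    conv_rhs =>
      rw [← neg_zero, ← gaussianReal_map_neg, Measure.map_apply measurable_neg measurableSet_Ioi]
    rfl
  calc gaussianReal 0 v {x | t < |x|}
      ≤ gaussianReal 0 v (-Ioi t) + gaussianReal 0 v (Ioi t) := hsplit ▸ measure_union_le _ _
    _ ≤ ENNReal.ofReal (√(v / (2 * π)) / t * rexp (-t ^ 2 / (2 * v))) +
        ENNReal.ofReal (√(v / (2 * π)) / t * rexp (-t ^ 2 / (2 * v))) := by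
        rw [hsymm]
        exact add_le_add (gaussianReal_Ioi_le hv ht) (gaussianReal_Ioi_le hv ht)
    _ = ENNReal.ofReal (√(2 * v / π) / t * rexp (-t ^ 2 / (2 * v))) := by
        rw [← ENNReal.ofReal_add (by positivity) (by positivity), ← add_mul, ← add_div, ← two_mul,
          show 2 * v / π = 2 ^ 2 * (v / (2 * π)) by field_simp,
          sqrt_mul (by positivity), sqrt_sq two_pos.le]

lemma gaussian_tail_at_threshold_le {σ a x δ : ℝ} (hσ : 0 < σ) (ha : 0 ≤ a) (hx : 1 < x)
    (hδ : δ = σ * √(2 * (1 + a) * log x)) :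
    √(2 * σ ^ 2 / π) / δ * rexp (-δ ^ 2 / (2 * σ ^ 2)) ≤ (x ^ a * √(π * log x))⁻¹ / x := by
  have hlog : 0 < log x := log_pos hx
  have hx0 : 0 < x := one_pos.trans hx
  have hδ2 : δ ^ 2 = σ ^ 2 * (2 * (1 + a) * log x) := by
    rw [hδ, mul_pow, sq_sqrt (by positivity)]
  have hδ0 : 0 < δ := hδ ▸ by positivity
  have hexp : rexp (-δ ^ 2 / (2 * σ ^ 2)) = (x ^ a * x)⁻¹ := by
    rw [hδ2, rpow_def_of_pos hx0, ← exp_log hx0, ← exp_add, ← exp_neg, log_exp]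
    congr 1
    field_simp
    ring
  have hcoef : √(2 * σ ^ 2 / π) / δ ≤ (√(π * log x))⁻¹ := by
    rw [← sqrt_inv, div_le_iff₀ hδ0, ← sqrt_sq hδ0.le, ← sqrt_mul (by positivity)]
    refine sqrt_le_sqrt ?_
    rw [hδ2]
    field_simp
    nlinarith [mul_nonneg ha hlog.le]
  calc √(2 * σ ^ 2 / π) / δ * rexp (-δ ^ 2 / (2 * σ ^ 2))
      ≤ (√(π * log x))⁻¹ * (x ^ a * x)⁻¹ := by
        rw [hexp]; exact mul_le_mul_of_nonneg_right hcoef (by positivity)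
    _ = (x ^ a * √(π * log x))⁻¹ / x := by
        field_simp

lemma one_sub_card_mul_le_measure_forall {Ω ι : Type*} [MeasurableSpace Ω] {P : Measure Ω}
    [IsProbabilityMeasure P] [Fintype ι] {E : ι → Ω → Prop} {r : ℝ≥0∞}
    (hE : ∀ i, P {ω | ¬ E i ω} ≤ r) :
    1 - Fintype.card ι * r ≤ P {ω | ∀ i, E i ω} := by
  have hcompl : {ω | ∀ i, E i ω}ᶜ = ⋃ i, {ω | ¬ E i ω} := by
    ext ω; simp
  have hunion : P {ω | ∀ i, E i ω}ᶜ ≤ Fintype.card ι * r := by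
    rw [hcompl]
    calc P (⋃ i, {ω | ¬ E i ω}) ≤ ∑ i, P {ω | ¬ E i ω} := measure_iUnion_fintype_le _ _
      _ ≤ ∑ _i : ι, r := Finset.sum_le_sum fun i _ => hE i
      _ = Fintype.card ι * r := by simp
  calc 1 - Fintype.card ι * r ≤ 1 - P {ω | ∀ i, E i ω}ᶜ := tsub_le_tsub_left hunion 1
    _ ≤ P {ω | ∀ i, E i ω} := by
      rw [tsub_le_iff_right, ← measure_univ (μ := P)]
      exact measure_univ_le_add_compl _

lemma ofReal_one_sub_le_measure_feas {Ω : Type*} [MeasurableSpace Ω] {P : Measure Ω}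
    [IsProbabilityMeasure P] {n p : ℕ} (hp : 2 ≤ p) {X : Matrix (Fin n) (Fin p) ℝ}
    (hcols : ∀ j, ∑ i, X i j ^ 2 = 1) {βstar : Fin p → ℝ} {σ : ℝ} (hσ : 0 < σ)
    {ε : Fin n → Ω → ℝ} (hindep : iIndepFun ε P)
    (hgauss : ∀ i, P.map (ε i) = gaussianReal 0 (σ ^ 2).toNNReal)
    {y : Ω → Fin n → ℝ} (hy : ∀ ω i, y ω i = (X *ᵥ βstar) i + ε i ω) {a : ℝ} (ha : 0 ≤ a)
    {δ : ℝ} (hδ : δ = σ * √(2 * (1 + a) * log p)) :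
    ENNReal.ofReal (1 - ((p : ℝ) ^ a * √(π * log p))⁻¹) ≤ P {ω | Feas X (y ω) δ βstar} := by
  have hp1 : (1 : ℝ) < p := by exact_mod_cast hp
  have hδ0 : 0 < δ := hδ ▸ mul_pos hσ (sqrt_pos.mpr (by have := log_pos hp1; positivity))
  have hv : (σ ^ 2).toNNReal ≠ 0 := by simp [hσ.ne']
  set q := ((p : ℝ) ^ a * √(π * log p))⁻¹
  have hlaw : ∀ j, HasLaw (fun ω => (Xᵀ *ᵥ (y ω - X *ᵥ βstar)) j)
      (gaussianReal 0 (σ ^ 2).toNNReal) P := fun j => by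
    have hnoise : ∀ ω, y ω - X *ᵥ βstar = fun i => ε i ω := fun ω => funext fun i => by
      simp [hy]
    simp only [hnoise]
    exact hasLaw_sum_mul_gaussianReal hindep
      (fun i => ⟨.of_map_ne_zero (hgauss i ▸ IsProbabilityMeasure.ne_zero _), hgauss i⟩) (hcols j)
  have htail : ∀ j, P {ω | ¬ |(Xᵀ *ᵥ (y ω - X *ᵥ βstar)) j| ≤ δ} ≤ ENNReal.ofReal (q / p) := by
    intro j
    rw [(hlaw j).measure_eq (p := fun x => ¬ |x| ≤ δ)
      (measurableSet_le continuous_abs.measurable measurable_const).compl]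
    simp only [not_le]
    refine (gaussianReal_lt_abs_le hv hδ0).trans (ENNReal.ofReal_le_ofReal ?_)
    rw [Real.coe_toNNReal _ (sq_nonneg σ)]
    exact gaussian_tail_at_threshold_le hσ ha hp1 hδ
  calc ENNReal.ofReal (1 - q) = 1 - Fintype.card (Fin p) * ENNReal.ofReal (q / p) := by
        rw [Fintype.card_fin, ← ENNReal.ofReal_natCast, ← ENNReal.ofReal_mul (by positivity),
          mul_div_cancel₀ _ (by positivity), ENNReal.ofReal_sub _ (by positivity),
          ENNReal.ofReal_one]
    _ ≤ P {ω | Feas X (y ω) δ βstar} := one_sub_card_mul_le_measure_forall htail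

section SparseRecovery

variable {n p : ℕ}

lemma l0_sub_le (u w : Fin p → ℝ) : l0 (u - w) ≤ l0 u + l0 w := by
  unfold l0
  refine (Finset.card_le_card fun i => ?_).trans (Finset.card_union_le _ _)
  simp only [Finset.mem_filter, Finset.mem_univ, true_and, Finset.mem_union, Pi.sub_apply]
  contrapose!
  rintro ⟨hu, hw⟩
  simp [hu, hw]

lemma sq_l1_le_l0_mul_l2sq (h : Fin p → ℝ) : l1 h ^ 2 ≤ l0 h * l2sq h := by
  set S := Finset.univ.filter fun i => h i ≠ 0
  have hl1 : l1 h = ∑ i ∈ S, 1 * |h i| := by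
    rw [l1, Finset.sum_filter_of_ne fun i _ hi => by simpa using hi]
    simp
  calc l1 h ^ 2 ≤ (∑ i ∈ S, (1 : ℝ) ^ 2) * ∑ i ∈ S, |h i| ^ 2 :=
        hl1 ▸ Finset.sum_mul_sq_le_sq_mul_sq S _ _
    _ ≤ l0 h * l2sq h := by
        simp only [one_pow, Finset.sum_const, nsmul_one, sq_abs, l0, l2sq]
        exact mul_le_mul_of_nonneg_left (Finset.sum_le_sum_of_subset_of_nonneg
          (Finset.filter_subset _ _) fun _ _ _ => sq_nonneg _) (Nat.cast_nonneg _)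

lemma l2sq_eq_dotProduct {q : ℕ} (v : Fin q → ℝ) : l2sq v = v ⬝ᵥ v := by
  simp only [l2sq, dotProduct, sq]

lemma l2sq_nonneg {q : ℕ} (v : Fin q → ℝ) : 0 ≤ l2sq v :=
  Finset.sum_nonneg fun _ _ => sq_nonneg _

lemma gammaX_nonneg (X : Matrix (Fin n) (Fin p) ℝ) (k : ℕ) : 0 ≤ gammaX X k :=
  Real.sInf_nonneg fun _ ⟨_, _, _, hr⟩ => hr ▸ div_nonneg (Real.sqrt_nonneg _) (Real.sqrt_nonneg _)

lemma gammaX_sq_mul_l2sq_le (X : Matrix (Fin n) (Fin p) ℝ) {k : ℕ} {h : Fin p → ℝ}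
    (hk : l0 h ≤ k) : gammaX X k ^ 2 * l2sq h ≤ l2sq (X *ᵥ h) := by
  rcases eq_or_ne h 0 with rfl | hne
  · simp [l2sq]
  have hpos : 0 < l2 h := Real.sqrt_pos.mpr <| (l2sq_nonneg h).lt_of_ne' <| by
    rwa [l2sq_eq_dotProduct, Ne, dotProduct_self_eq_zero]
  have hle : gammaX X k ≤ l2 (X *ᵥ h) / l2 h :=
    csInf_le ⟨0, fun _ ⟨_, _, _, hr⟩ => hr ▸ div_nonneg (Real.sqrt_nonneg _) (Real.sqrt_nonneg _)⟩
      ⟨h, hne, hk, rfl⟩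
  have hmul : gammaX X k * l2 h ≤ l2 (X *ᵥ h) := (le_div_iff₀ hpos).mp hle
  calc gammaX X k ^ 2 * l2sq h = (gammaX X k * l2 h) ^ 2 := by
        rw [mul_pow, l2, Real.sq_sqrt (l2sq_nonneg h)]
    _ ≤ l2 (X *ᵥ h) ^ 2 := pow_le_pow_left₀ (by positivity [gammaX_nonneg X k]) hmul 2
    _ = l2sq (X *ᵥ h) := Real.sq_sqrt (l2sq_nonneg _)

lemma l2sq_mulVec_le_l1_mul (X : Matrix (Fin n) (Fin p) ℝ) (h : Fin p → ℝ) {b : ℝ}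
    (hb : ∀ j, |(Xᵀ *ᵥ X *ᵥ h) j| ≤ b) : l2sq (X *ᵥ h) ≤ l1 h * b := by
  have hquad : l2sq (X *ᵥ h) = h ⬝ᵥ (Xᵀ *ᵥ X *ᵥ h) := by
    rw [dotProduct_mulVec, vecMul_transpose, l2sq_eq_dotProduct]
  rw [hquad, l1, Finset.sum_mul, dotProduct]
  refine Finset.sum_le_sum fun j _ => ?_
  calc h j * (Xᵀ *ᵥ X *ᵥ h) j ≤ |h j| * |(Xᵀ *ᵥ X *ᵥ h) j| := by
        rw [← abs_mul]; exact le_abs_self _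
    _ ≤ |h j| * b := by gcongr; exact hb j

lemma abs_transpose_mulVec_mulVec_sub_le (X : Matrix (Fin n) (Fin p) ℝ) {y : Fin n → ℝ} {δ : ℝ}
    {β₁ β₂ : Fin p → ℝ} (h₁ : Feas X y δ β₁) (h₂ : Feas X y δ β₂) (j : Fin p) :
    |(Xᵀ *ᵥ X *ᵥ (β₁ - β₂)) j| ≤ 2 * δ := by
  have hdiff : Xᵀ *ᵥ X *ᵥ (β₁ - β₂) = Xᵀ *ᵥ (y - X *ᵥ β₂) - Xᵀ *ᵥ (y - X *ᵥ β₁) := by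
    simp only [mulVec_sub]
    abel
  rw [hdiff, Pi.sub_apply, two_mul]
  exact (abs_sub _ _).trans (add_le_add (h₂ j) (h₁ j))

lemma error_bounds_of_l0_le (X : Matrix (Fin n) (Fin p) ℝ) {h : Fin p → ℝ} {K b : ℝ}
    (hb : 0 ≤ b) (hK : (l0 h : ℝ) ≤ K) (hγ : 0 < gammaX X ⌈K⌉₊)
    (hXh : ∀ j, |(Xᵀ *ᵥ X *ᵥ h) j| ≤ b) :
    l1 h ≤ b * K / gammaX X ⌈K⌉₊ ^ 2 ∧ l2sq h ≤ b ^ 2 * K / gammaX X ⌈K⌉₊ ^ 4 ∧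
      l2sq (X *ᵥ h) ≤ b ^ 2 * K / gammaX X ⌈K⌉₊ ^ 2 := by
  set γ := gammaX X ⌈K⌉₊
  have hRE : γ ^ 2 * l2sq h ≤ l2sq (X *ᵥ h) :=
    gammaX_sq_mul_l2sq_le X (by exact_mod_cast hK.trans (Nat.le_ceil K))
  have hfit : l2sq (X *ᵥ h) ≤ l1 h * b := l2sq_mulVec_le_l1_mul X h hXh
  have hCS : l1 h ^ 2 ≤ K * l2sq h :=
    (sq_l1_le_l0_mul_l2sq h).trans (mul_le_mul_of_nonneg_right hK (l2sq_nonneg h))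
  have hK0 : 0 ≤ K := (Nat.cast_nonneg _).trans hK
  have hl1_nonneg : 0 ≤ l1 h := Finset.sum_nonneg fun _ _ => abs_nonneg _
  -- `γ² ‖h‖₁² ≤ γ² K ‖h‖₂² ≤ K ‖Xh‖₂² ≤ K b ‖h‖₁`, then divide by `‖h‖₁`.
  have hl1 : γ ^ 2 * l1 h ≤ b * K := by
    rcases hl1_nonneg.eq_or_lt with hzero | hpos
    · rw [← hzero, mul_zero]; exact mul_nonneg hb hK0
    · refine le_of_mul_le_mul_right ?_ hpos
      nlinarith [mul_le_mul_of_nonneg_left hCS (sq_nonneg γ), hRE, hfit]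
  have hXh2 : γ ^ 2 * l2sq (X *ᵥ h) ≤ b ^ 2 * K := by
    nlinarith [mul_le_mul_of_nonneg_left hfit (sq_nonneg γ)]
  have hl2 : γ ^ 4 * l2sq h ≤ b ^ 2 * K := by
    nlinarith [mul_le_mul_of_nonneg_left hRE (sq_nonneg γ)]
  refine ⟨?_, ?_, ?_⟩ <;> rw [le_div_iff₀ (by positivity)] <;> linarith

lemma near_optimal_feasible_error_bounds (X : Matrix (Fin n) (Fin p) ℝ) {y : Fin n → ℝ}
    {δ c : ℝ} {βstar β : Fin p → ℝ} {sLB : ℕ} (hδ : 0 ≤ δ) (hc : 0 ≤ c)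
    (hγ : 0 < gammaX X ⌈(2 + c) * (l0 βstar : ℝ)⌉₊)
    (hstar : Feas X y δ βstar) (hβ : Feas X y δ β) (hLB : sLB ≤ l0 βstar)
    (hnear : (l0 β : ℝ) ≤ (1 + c) * sLB) :
    (l0 β : ℝ) ≤ (1 + c) * l0 βstar ∧
    l1 (β - βstar) ≤
      2 * (2 + c) * (gammaX X ⌈(2 + c) * (l0 βstar : ℝ)⌉₊ ^ 2)⁻¹ * l0 βstar * δ ∧
    l2sq (β - βstar) ≤
      4 * (2 + c) * (gammaX X ⌈(2 + c) * (l0 βstar : ℝ)⌉₊ ^ 4)⁻¹ * l0 βstar * δ ^ 2 ∧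
    (n : ℝ)⁻¹ * l2sq (X *ᵥ (β - βstar)) ≤
      4 * (2 + c) * (gammaX X ⌈(2 + c) * (l0 βstar : ℝ)⌉₊ ^ 2)⁻¹ * l0 βstar * δ ^ 2 := by
  have hsparse : (l0 β : ℝ) ≤ (1 + c) * l0 βstar :=
    hnear.trans (mul_le_mul_of_nonneg_left (by exact_mod_cast hLB) (by linarith))
  have hdiff : (l0 (β - βstar) : ℝ) ≤ (2 + c) * l0 βstar := by
    have hsub : (l0 (β - βstar) : ℝ) ≤ l0 β + l0 βstar := by exact_mod_cast l0_sub_le β βstar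
    linarith
  obtain ⟨hl1, hl2, hpred⟩ := error_bounds_of_l0_le X (by linarith) hdiff hγ
    (abs_transpose_mulVec_mulVec_sub_le X hβ hstar)
  refine ⟨hsparse, ?_, ?_, ?_⟩
  · exact hl1.trans_eq (by ring)
  · exact hl2.trans_eq (by ring)
  · exact (mul_le_of_le_one_left (l2sq_nonneg _) (Nat.cast_inv_le_one n)).trans
      (hpred.trans_eq (by ring))

end SparseRecovery

theorem stmt8_general {Ω : Type*} [MeasurableSpace Ω] (P : Measure Ω) [IsProbabilityMeasure P]
    {n p : ℕ} (hp : 2 ≤ p) (X : Matrix (Fin n) (Fin p) ℝ)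
    (hcols : ∀ j, ∑ i, (X i j) ^ 2 = 1)
    (βstar : Fin p → ℝ) (s : ℕ) (hs : s = l0 βstar)
    (σ : ℝ) (hσ : 0 < σ)
    (ε : Fin n → Ω → ℝ)
    (hindep : iIndepFun ε P)
    (hgauss : ∀ i, Measure.map (ε i) P = gaussianReal 0 (σ ^ 2).toNNReal)
    (y : Ω → Fin n → ℝ) (hy : ∀ ω i, y ω i = X.mulVec βstar i + ε i ω)
    (a : ℝ) (ha : 0 ≤ a)
    (δ : ℝ) (hδ : δ = σ * Real.sqrt (2 * (1 + a) * Real.log p))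
    (cc : ℝ) (hcc : 0 ≤ cc)
    (hγ : 0 < gammaX X (Nat.ceil ((2 + cc) * (s : ℝ))))
    (βhat : Ω → Fin p → ℝ) (sLB : Ω → ℕ)
    (hLB : ∀ ω, ∀ β : Fin p → ℝ, Feas X (y ω) δ β → sLB ω ≤ l0 β)
    (hfeas : ∀ ω, Feas X (y ω) δ (βhat ω))
    (hnearopt : ∀ ω, (l0 (βhat ω) : ℝ) ≤ (1 + cc) * (sLB ω : ℝ)) :
    ENNReal.ofReal (1 - ((p : ℝ) ^ a * Real.sqrt (Real.pi * Real.log p))⁻¹) ≤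
      P {ω |
        (l0 (βhat ω) : ℝ) ≤ (1 + cc) * (s : ℝ) ∧
        l1 (βhat ω - βstar) ≤
          2 * (2 + cc) * ((gammaX X (Nat.ceil ((2 + cc) * (s : ℝ)))) ^ 2)⁻¹ * s * δ ∧
        l2sq (βhat ω - βstar) ≤
          4 * (2 + cc) * ((gammaX X (Nat.ceil ((2 + cc) * (s : ℝ)))) ^ 4)⁻¹ * s * δ ^ 2 ∧
        (n : ℝ)⁻¹ * l2sq (X.mulVec (βhat ω - βstar)) ≤
          4 * (2 + cc) * ((gammaX X (Nat.ceil ((2 + cc) * (s : ℝ)))) ^ 2)⁻¹ * s * δ ^ 2} := by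
  subst hs
  exact (ofReal_one_sub_le_measure_feas hp hcols hσ hindep hgauss hy ha hδ).trans <|
    measure_mono fun ω hω => near_optimal_feasible_error_bounds X
      (hδ ▸ mul_nonneg hσ.le (sqrt_nonneg _)) hcc hγ hω (hfeas ω) (hLB ω βstar hω) (hnearopt ω)

/-- Error bounds for a feasible (not necessarily optimal) solution whose
ℓ₀-norm is within a multiplicative factor `1 + c` of the lower bound `ŝ_LB` on the
optimal value.  Here `γ` is evaluated at `⌈(2+c)s*⌉`. -/
theorem stmt8 {Ω : Type*} [MeasurableSpace Ω] (P : Measure Ω) [IsProbabilityMeasure P]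
    {n p : ℕ} (hp : 2 ≤ p) (X : Matrix (Fin n) (Fin p) ℝ)
    (hcols : ∀ j, ∑ i, (X i j) ^ 2 = 1)
    (βstar : Fin p → ℝ) (s : ℕ) (hs : s = l0 βstar)
    (σ : ℝ) (hσ : 0 < σ)
    (ε : Fin n → Ω → ℝ) (hmeas : ∀ i, Measurable (ε i))
    (hindep : iIndepFun ε P)
    (hgauss : ∀ i, Measure.map (ε i) P = gaussianReal 0 (σ ^ 2).toNNReal)
    (y : Ω → Fin n → ℝ) (hy : ∀ ω i, y ω i = X.mulVec βstar i + ε i ω)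
    (a : ℝ) (ha : 0 ≤ a)
    (δ : ℝ) (hδ : δ = σ * Real.sqrt (2 * (1 + a) * Real.log p))
    (cc : ℝ) (hcc : 0 ≤ cc)
    (hγ : 0 < gammaX X (Nat.ceil ((2 + cc) * (s : ℝ))))
    (βhat : Ω → Fin p → ℝ) (sLB : Ω → ℕ)
    (hLB : ∀ ω, ∀ β : Fin p → ℝ, Feas X (y ω) δ β → sLB ω ≤ l0 β)
    (hfeas : ∀ ω, Feas X (y ω) δ (βhat ω))
    (hnearopt : ∀ ω, (l0 (βhat ω) : ℝ) ≤ (1 + cc) * (sLB ω : ℝ)) :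
    ENNReal.ofReal (1 - ((p : ℝ) ^ a * Real.sqrt (Real.pi * Real.log p))⁻¹) ≤
      P {ω |
        (l0 (βhat ω) : ℝ) ≤ (1 + cc) * (s : ℝ) ∧
        l1 (βhat ω - βstar) ≤
          2 * (2 + cc) * ((gammaX X (Nat.ceil ((2 + cc) * (s : ℝ)))) ^ 2)⁻¹ * s * δ ∧
        l2sq (βhat ω - βstar) ≤
          4 * (2 + cc) * ((gammaX X (Nat.ceil ((2 + cc) * (s : ℝ)))) ^ 4)⁻¹ * s * δ ^ 2 ∧
        (n : ℝ)⁻¹ * l2sq (X.mulVec (βhat ω - βstar)) ≤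
          4 * (2 + cc) * ((gammaX X (Nat.ceil ((2 + cc) * (s : ℝ)))) ^ 2)⁻¹ * s * δ ^ 2} :=
  stmt8_general P hp X hcols βstar s hs σ hσ ε hindep hgauss y hy a ha δ hδ cc hcc hγ βhat sLB hLB
    hfeas hnearopt
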